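/- arXiv:2008.10111 — 6 statements merged into one kernel-verified Lean document; each statement's English description precedes it below -/
import Mathlib

section
/- Let X = ⋂_{i=1}^N {x ∈ ℝ^m : ⟪x, nᵢ⟫ ≤ cᵢ} be a convex polytope, let y ∈ X with active index set A(y), and let v ∈ N_y⁺X \ {0} and w ∈ T_y⁺X \ {0}. Then ⟪v, w⟫ = 0 if and only if v lies in the convex cone generated by {nᵢ : i ∈ A(y) and ⟪w, nᵢ⟫ = 0}, i.e. v = Σ aᵢ nᵢ with aᵢ ≥ 0 and the sum running over those active indices i with ⟪w, nᵢ⟫ = 0. (Point form of Lemma 3.3: equivalently, there is a face E of X whose closure contains the face through y, with v ∈ N_E⁺X and w tangent to the closure of E.) -/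
open RealInnerProductSpace

/-- The tangent cone `T_y⁺X`: the closure of the set of directions `v` such that
`y + ε v ∈ X` for some `ε > 0`. -/
def tangentConePlus {m : ℕ} (X : Set (EuclideanSpace ℝ (Fin m)))
    (y : EuclideanSpace ℝ (Fin m)) : Set (EuclideanSpace ℝ (Fin m)) :=
  closure {v | ∃ ε : ℝ, 0 < ε ∧ y + ε • v ∈ X}

/-- The positive normal cone `N_y⁺X`. -/
def normalConePlus {m : ℕ} (X : Set (EuclideanSpace ℝ (Fin m)))
    (y : EuclideanSpace ℝ (Fin m)) : Set (EuclideanSpace ℝ (Fin m)) :=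
  {v | ∀ x ∈ X, ⟪x - y, v⟫ ≤ 0}

/-!
By Farkas' lemma, the normal cone of the polytope at `y` is the cone generated by the active
normals `nᵢ`, and `w`, being tangent, pairs nonpositively with each of them. Writing
`v = ∑ aᵢ nᵢ` with `aᵢ ≥ 0` over the active indices, `⟪v, w⟫ = ∑ aᵢ ⟪nᵢ, w⟫` is a sum of
nonpositive terms, so it vanishes exactly when every `nᵢ` with `aᵢ > 0` is orthogonal to `w`.
Farkas' lemma needs finitely generated cones to be closed; this follows from Carathéodory's
theorem for cones, which reduces them to finite unions of cones over linearly independent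
families, i.e. to images of the nonnegative orthant under injective linear maps.
-/

namespace PointedCone

section Module

variable {ι E : Type*} [AddCommGroup E] [Module ℝ E]

lemma mem_hull_image_finset_iff {v : ι → E} {s : Finset ι} {x : E} :
    x ∈ hull ℝ (v '' s) ↔ ∃ a : ι → ℝ, (∀ i ∈ s, 0 ≤ a i) ∧ ∑ i ∈ s, a i • v i = x := by
  rw [hull, Submodule.mem_span_image_finset_iff_exists_fun']
  constructor
  · rintro ⟨c, rfl⟩
    exact ⟨fun i => c i, fun i _ => (c i).2, rfl⟩
  · rintro ⟨a, ha, rfl⟩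
    refine ⟨fun i => ⟨max (a i) 0, le_max_right _ _⟩, Finset.sum_congr rfl fun i hi => ?_⟩
    rw [Nonneg.mk_smul, max_eq_left (ha i hi)]

lemma mem_hull_image_finset_iff_sum_univ [Fintype ι] {v : ι → E} {s : Finset ι} {x : E} :
    x ∈ hull ℝ (v '' s) ↔
      ∃ a : ι → ℝ, (∀ i, 0 ≤ a i) ∧ (∀ i ∉ s, a i = 0) ∧ x = ∑ i, a i • v i := by
  classical
  rw [mem_hull_image_finset_iff]
  constructor
  · rintro ⟨a, ha, rfl⟩
    refine ⟨fun i => if i ∈ s then a i else 0, fun i => ?_, fun i hi => if_neg hi, ?_⟩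
    · dsimp only
      split_ifs with hi
      exacts [ha i hi, le_rfl]
    · simp only [ite_smul, zero_smul, Finset.sum_ite_mem, Finset.univ_inter]
  · rintro ⟨a, ha, hs, rfl⟩
    exact ⟨a, fun i _ => ha i,
      Finset.sum_subset (Finset.subset_univ s) fun i _ hi => by rw [hs i hi, zero_smul]⟩

lemma exists_pos_relation_of_not_linearIndepOn {v : ι → E} {s : Finset ι}
    (hs : ¬LinearIndepOn ℝ v s) :
    ∃ g : ι → ℝ, ∑ i ∈ s, g i • v i = 0 ∧ ∃ i ∈ s, 0 < g i := by
  obtain ⟨g, hg, i, hi, hgi⟩ := not_linearIndepOn_finset_iff.mp hs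
  rcases hgi.lt_or_gt with hneg | hpos
  · exact ⟨-g, by simp [neg_smul, Finset.sum_neg_distrib, hg], i, hi, by simpa using hneg⟩
  · exact ⟨g, hg, i, hi, hpos⟩

/-- Subtracting the largest admissible multiple of a positive linear relation kills one
coefficient while keeping the others nonnegative. -/
lemma exists_mem_hull_image_erase_of_not_linearIndepOn [DecidableEq ι] {v : ι → E}
    {s : Finset ι} {x : E} (hs : ¬LinearIndepOn ℝ v s) (hx : x ∈ hull ℝ (v '' s)) :
    ∃ j ∈ s, x ∈ hull ℝ (v '' (s.erase j : Finset ι)) := by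
  obtain ⟨a, ha, rfl⟩ := mem_hull_image_finset_iff.mp hx
  obtain ⟨g, hg, i₀, hi₀, hgi₀⟩ := exists_pos_relation_of_not_linearIndepOn hs
  obtain ⟨j, hj, hmin⟩ := Finset.exists_min_image (s.filter (0 < g ·)) (fun i => a i / g i)
    ⟨i₀, Finset.mem_filter.mpr ⟨hi₀, hgi₀⟩⟩
  rw [Finset.mem_filter] at hj
  set t := a j / g j
  have ht : 0 ≤ t := div_nonneg (ha j hj.1) hj.2.le
  set b : ι → ℝ := fun i => a i - t * g i
  have hb : ∀ i ∈ s, 0 ≤ b i := by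
    intro i hi
    rcases le_or_gt (g i) 0 with hgi | hgi
    · nlinarith [ha i hi]
    · have := hmin i (Finset.mem_filter.mpr ⟨hi, hgi⟩)
      rw [le_div_iff₀ hgi] at this
      linarith
  have hbj : b j = 0 := by simp only [b, t, div_mul_cancel₀ _ hj.2.ne', sub_self]
  refine ⟨j, hj.1, mem_hull_image_finset_iff.mpr
    ⟨b, fun i hi => hb i (Finset.mem_of_mem_erase hi), ?_⟩⟩
  rw [Finset.sum_erase s (by rw [hbj, zero_smul])]
  simp only [b, sub_smul, mul_smul, Finset.sum_sub_distrib, ← Finset.smul_sum, hg, smul_zero,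
    sub_zero]

lemma exists_linearIndepOn_of_mem_hull_image {v : ι → E} {s : Finset ι} {x : E}
    (hx : x ∈ hull ℝ (v '' s)) :
    ∃ t ⊆ s, LinearIndepOn ℝ v (t : Set ι) ∧ x ∈ hull ℝ (v '' t) := by
  classical
  induction s using Finset.strongInduction with
  | H s ih =>
    by_cases hs : LinearIndepOn ℝ v (s : Set ι)
    · exact ⟨s, subset_rfl, hs, hx⟩
    · obtain ⟨j, hj, hxj⟩ := exists_mem_hull_image_erase_of_not_linearIndepOn hs hx
      obtain ⟨t, hts, ht, hxt⟩ := ih _ (Finset.erase_ssubset hj) hxj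
      exact ⟨t, hts.trans (Finset.erase_subset _ _), ht, hxt⟩

end Module

section Normed

variable {ι E : Type*} [NormedAddCommGroup E] [NormedSpace ℝ E]

lemma isClosed_hull_range_of_linearIndependent [Fintype ι] {v : ι → E}
    (hv : LinearIndependent ℝ v) : IsClosed (hull ℝ (Set.range v) : Set E) := by
  have hcoe : (hull ℝ (Set.range v) : Set E) = Fintype.linearCombination ℝ v '' Set.Ici 0 := by
    ext x
    rw [← Set.image_univ, ← Finset.coe_univ, SetLike.mem_coe, mem_hull_image_finset_iff]
    simp [Fintype.linearCombination_apply, Pi.le_def]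
  have hinj := linearIndependent_iff_injective_fintypeLinearCombination.mp hv
  rw [hcoe]
  exact ((Fintype.linearCombination ℝ v).isClosedEmbedding_of_injective
    (LinearMap.ker_eq_bot.mpr hinj)).isClosedMap _ isClosed_Ici

lemma isClosed_hull_image (v : ι → E) (s : Finset ι) : IsClosed (hull ℝ (v '' s) : Set E) := by
  classical
  have hunion : (hull ℝ (v '' s) : Set E) =
      ⋃ t ∈ s.powerset.filter fun t : Finset ι => LinearIndepOn ℝ v (t : Set ι),
        (hull ℝ (v '' (t : Set ι)) : Set E) := by
    apply subset_antisymm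
    · intro x hx
      obtain ⟨t, hts, ht, hxt⟩ := exists_linearIndepOn_of_mem_hull_image hx
      exact Set.mem_biUnion (Finset.mem_filter.mpr ⟨Finset.mem_powerset.mpr hts, ht⟩) hxt
    · exact Set.iUnion₂_subset fun t ht => Submodule.span_mono
        (Set.image_mono (by simpa using (Finset.mem_filter.mp ht).1))
  rw [hunion]
  refine isClosed_biUnion_finset fun t ht => ?_
  rw [Set.image_eq_range]
  exact isClosed_hull_range_of_linearIndependent (Finset.mem_filter.mp ht).2

end Normed

section InnerProduct

variable {ι E : Type*} [NormedAddCommGroup E] [InnerProductSpace ℝ E]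

lemma exists_inner_neg_of_notMem_hull_image [CompleteSpace E] {v : ι → E} {s : Finset ι}
    {x : E} (hx : x ∉ hull ℝ (v '' s)) : ∃ u, (∀ i ∈ s, 0 ≤ ⟪v i, u⟫) ∧ ⟪x, u⟫ < 0 := by
  obtain ⟨u, hu, hxu⟩ :=
    ProperCone.hyperplane_separation' ⟨hull ℝ (v '' s), isClosed_hull_image v s⟩ hx
  exact ⟨u, fun i hi => hu _ (subset_hull (Set.mem_image_of_mem v hi)), hxu⟩

lemma mem_hull_image_filter_of_inner_eq_zero {v : ι → E} {s : Finset ι} {x w : E}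
    (hx : x ∈ hull ℝ (v '' s)) (hs : ∀ i ∈ s, ⟪w, v i⟫ ≤ 0) (hxw : ⟪w, x⟫ = 0) :
    x ∈ hull ℝ (v '' (s.filter fun i => ⟪w, v i⟫ = 0 : Finset ι)) := by
  obtain ⟨a, ha, rfl⟩ := mem_hull_image_finset_iff.mp hx
  have hterm : ∀ i ∈ s, a i * ⟪w, v i⟫ ≤ 0 := fun i hi =>
    mul_nonpos_of_nonneg_of_nonpos (ha i hi) (hs i hi)
  simp only [inner_sum, real_inner_smul_right] at hxw
  have hzero := (Finset.sum_eq_zero_iff_of_nonpos hterm).mp hxw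
  refine mem_hull_image_finset_iff.mpr ⟨a, fun i hi => ha i (Finset.mem_filter.mp hi).1, ?_⟩
  refine Finset.sum_filter_of_ne fun i hi hne => ?_
  exact (mul_eq_zero.mp (hzero i hi)).resolve_left fun h => hne (by rw [h, zero_smul])

end InnerProduct

end PointedCone

section Polyhedron

open Filter Topology

variable {ι E : Type*} [NormedAddCommGroup E] [InnerProductSpace ℝ E]

lemma exists_pos_add_smul_mem_of_active_inner_nonpos [Finite ι] {n : ι → E} {c : ι → ℝ}
    {y z : E} (hy : y ∈ ⋂ i, {x | ⟪x, n i⟫ ≤ c i})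
    (hz : ∀ i, ⟪y, n i⟫ = c i → ⟪z, n i⟫ ≤ 0) :
    ∃ ε : ℝ, 0 < ε ∧ y + ε • z ∈ ⋂ i, {x | ⟪x, n i⟫ ≤ c i} := by
  have hy' : ∀ i, ⟪y, n i⟫ ≤ c i := Set.mem_iInter.mp hy
  have hev : ∀ i, ∀ᶠ ε in 𝓝[>] (0 : ℝ), ⟪y + ε • z, n i⟫ ≤ c i := by
    intro i
    simp only [inner_add_left, real_inner_smul_left]
    rcases (hy' i).eq_or_lt with hact | hlt
    · filter_upwards [self_mem_nhdsWithin] with ε hε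
      nlinarith [hz i hact, Set.mem_Ioi.mp hε]
    · refine eventually_nhdsWithin_of_eventually_nhds ?_
      have hcont : Continuous fun ε : ℝ => ⟪y, n i⟫ + ε * ⟪z, n i⟫ := by fun_prop
      exact ((hcont.tendsto 0).eventually (gt_mem_nhds (by simpa using hlt))).mono
        fun _ => le_of_lt
  obtain ⟨ε, hε, hpos⟩ := ((eventually_all.mpr hev).and self_mem_nhdsWithin).exists
  exact ⟨ε, hpos, Set.mem_iInter.mpr hε⟩

variable {m : ℕ}

lemma inner_nonpos_of_mem_tangentConePlus {X : Set (EuclideanSpace ℝ (Fin m))}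
    {y w a : EuclideanSpace ℝ (Fin m)} {b : ℝ} (hX : X ⊆ {x | ⟪x, a⟫ ≤ b}) (hy : ⟪y, a⟫ = b)
    (hw : w ∈ tangentConePlus X y) : ⟪w, a⟫ ≤ 0 := by
  refine closure_minimal (t := {z | ⟪z, a⟫ ≤ 0}) ?_
    (isClosed_le (by fun_prop) continuous_const) hw
  rintro z ⟨ε, hε, hz⟩
  have hle : ⟪y + ε • z, a⟫ ≤ b := hX hz
  rw [inner_add_left, real_inner_smul_left, hy] at hle
  exact nonpos_of_mul_nonpos_right (by linarith) hε

lemma mem_hull_active_of_mem_normalConePlus [Fintype ι] {n : ι → EuclideanSpace ℝ (Fin m)}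
    {c : ι → ℝ} {y v : EuclideanSpace ℝ (Fin m)} (hy : y ∈ ⋂ i, {x | ⟪x, n i⟫ ≤ c i})
    (hv : v ∈ normalConePlus (⋂ i, {x | ⟪x, n i⟫ ≤ c i}) y) :
    v ∈ PointedCone.hull ℝ (n '' (Finset.univ.filter fun i => ⟪y, n i⟫ = c i : Finset ι)) := by
  by_contra hnot
  obtain ⟨u, hu, hvu⟩ := PointedCone.exists_inner_neg_of_notMem_hull_image hnot
  obtain ⟨ε, hε, hmem⟩ := exists_pos_add_smul_mem_of_active_inner_nonpos hy (z := -u)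
    fun i hi => by
      rw [inner_neg_left, real_inner_comm, neg_nonpos]
      exact hu i (by simp [hi])
  have hle := hv _ hmem
  rw [add_sub_cancel_left, real_inner_smul_left, inner_neg_left, real_inner_comm] at hle
  nlinarith

end Polyhedron

theorem normalCone_orthogonal_iff_general {m N : ℕ}
    (n : Fin N → EuclideanSpace ℝ (Fin m)) (c : Fin N → ℝ)
    (X : Set (EuclideanSpace ℝ (Fin m)))
    (hX : X = ⋂ i, {x | ⟪x, n i⟫ ≤ c i})
    (y : EuclideanSpace ℝ (Fin m)) (hy : y ∈ X)
    (v w : EuclideanSpace ℝ (Fin m))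
    (hv : v ∈ normalConePlus X y)
    (hw : w ∈ tangentConePlus X y) :
    ⟪v, w⟫ = 0 ↔
      ∃ a : Fin N → ℝ, (∀ i, 0 ≤ a i) ∧
        (∀ i, ¬(⟪y, n i⟫ = c i ∧ ⟪w, n i⟫ = 0) → a i = 0) ∧
        v = ∑ i, a i • n i := by
  subst hX
  constructor
  · intro hvw
    have hw_active : ∀ i ∈ Finset.univ.filter fun i => ⟪y, n i⟫ = c i, ⟪w, n i⟫ ≤ 0 :=
      fun i hi => inner_nonpos_of_mem_tangentConePlus (Set.iInter_subset _ i)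
        (Finset.mem_filter.mp hi).2 hw
    have hface := PointedCone.mem_hull_image_filter_of_inner_eq_zero
      (mem_hull_active_of_mem_normalConePlus hy hv) hw_active (by rwa [real_inner_comm])
    rw [Finset.filter_filter] at hface
    obtain ⟨a, ha, hsupp, hsum⟩ := PointedCone.mem_hull_image_finset_iff_sum_univ.mp hface
    exact ⟨a, ha, fun i hi => hsupp i (by simpa using hi), hsum⟩
  · rintro ⟨a, -, hsupp, rfl⟩
    rw [sum_inner]
    refine Finset.sum_eq_zero fun i _ => ?_
    rw [real_inner_smul_left, real_inner_comm]
    by_cases h : ⟪y, n i⟫ = c i ∧ ⟪w, n i⟫ = 0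
    · rw [h.2, mul_zero]
    · rw [hsupp i h, zero_mul]

/-- Lemma 3.3 (point form): for a convex polytope `X = ⋂ i, {x : ⟪x, nᵢ⟫ ≤ cᵢ}`,
a point `y ∈ X`, a nonzero `v ∈ N_y⁺X` and a nonzero `w ∈ T_y⁺X`, we have
`⟪v, w⟫ = 0` if and only if `v` lies in the convex cone generated by the
normals `nᵢ` of those half-spaces that are active at `y` and satisfy
`⟪w, nᵢ⟫ = 0`. -/
theorem normalCone_orthogonal_iff {m N : ℕ}
    (n : Fin N → EuclideanSpace ℝ (Fin m)) (c : Fin N → ℝ)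
    (hn : ∀ i, n i ≠ 0)
    (X : Set (EuclideanSpace ℝ (Fin m)))
    (hX : X = ⋂ i, {x | ⟪x, n i⟫ ≤ c i})
    (hcomp : IsCompact X)
    (y : EuclideanSpace ℝ (Fin m)) (hy : y ∈ X)
    (v w : EuclideanSpace ℝ (Fin m))
    (hv : v ∈ normalConePlus X y) (hv0 : v ≠ 0)
    (hw : w ∈ tangentConePlus X y) (hw0 : w ≠ 0) :
    ⟪v, w⟫ = 0 ↔
      ∃ a : Fin N → ℝ, (∀ i, 0 ≤ a i) ∧
        (∀ i, ¬(⟪y, n i⟫ = c i ∧ ⟪w, n i⟫ = 0) → a i = 0) ∧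
        v = ∑ i, a i • n i :=
  normalCone_orthogonal_iff_general n c X hX y hy v w hv hw
end

section
/- Regard ℂⁿ as a real inner product space with inner product ⟪u, v⟫ = Re⟨u, v⟩. Let X = ⋂_{i=1}^N {x ∈ ℂⁿ : ⟪x, nᵢ⟫ ≤ cᵢ} be a convex polytope, let y ∈ X with active index set A(y) = {i : ⟪y, nᵢ⟫ = cᵢ}, and let i₀ ∈ A(y). Suppose v satisfies v ∈ T_y⁺X and −I·v ∈ N_y⁺X (where I·v denotes multiplication of v by the imaginary unit), and suppose ⟪v, n_{i₀}⟫ = 0 while ⟪v, nⱼ⟫ < 0 for every j ∈ A(y) with j ≠ i₀. Then there exists a ≥ 0 with −I·v = a·n_{i₀}; moreover a > 0 if v ≠ 0. (Point form of Lemma 3.6: a vector of the Reeb cone lying in the interior of the tangent cone of a (2n−1)-face E is a positive multiple of I·ν_E.) -/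
/-!
Put `w = -I • v`, so that `⟪v, w⟫ = 0`. For `u ⟂ n_{i₀}` and `δ > 0`, the vector
`u - δ n_{i₀} + t v` decreases every active constraint strictly once `t` is large, hence points
into `X`, and the normal-cone inequality gives `⟪u, w⟫ ≤ δ ⟪n_{i₀}, w⟫`. Letting `δ → 0` (and
replacing `u` by `-u`) shows `w ⟂ n_{i₀}ᗮ`, so `w = a n_{i₀}`; taking `u = 0` gives `a ≥ 0`,
and `a = 0` would force `v = 0`.
-/

/-- The real inner product `⟪u, v⟫ = Re⟨u, v⟩` on `ℂⁿ`. -/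
noncomputable def rInner {n : ℕ} (u v : EuclideanSpace ℂ (Fin n)) : ℝ :=
  (inner ℂ u v : ℂ).re

/-- The tangent cone `T_y⁺X` in `ℂⁿ` (with real scalars). -/
def tangentConePlusC {n : ℕ} (X : Set (EuclideanSpace ℂ (Fin n)))
    (y : EuclideanSpace ℂ (Fin n)) : Set (EuclideanSpace ℂ (Fin n)) :=
  closure {v | ∃ ε : ℝ, 0 < ε ∧ y + ε • v ∈ X}

/-- The positive normal cone `N_y⁺X` in `ℂⁿ`, with respect to the real inner
product. -/
noncomputable def normalConePlusC {n : ℕ} (X : Set (EuclideanSpace ℂ (Fin n)))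
    (y : EuclideanSpace ℂ (Fin n)) : Set (EuclideanSpace ℂ (Fin n)) :=
  {v | ∀ x ∈ X, rInner (x - y) v ≤ 0}

open Filter Topology RealInnerProductSpace

section Polyhedron

variable {E ι : Type*} [NormedAddCommGroup E] [InnerProductSpace ℝ E] [Finite ι]
  {nv : ι → E} {c : ι → ℝ} {y w : E}

lemma eventually_add_smul_le_of_active_inner_neg (hy : ∀ i, ⟪y, nv i⟫ ≤ c i) {u : E}
    (hu : ∀ j, ⟪y, nv j⟫ = c j → ⟪u, nv j⟫ < 0) :
    ∀ᶠ ε in 𝓝[>] (0 : ℝ), ∀ i, ⟪y + ε • u, nv i⟫ ≤ c i := by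
  refine eventually_all.2 fun i => ?_
  simp only [inner_add_left, inner_smul_left, RCLike.conj_to_real]
  rcases (hy i).eq_or_lt with hi | hi
  · filter_upwards [self_mem_nhdsWithin] with ε hε
    nlinarith [hu i hi, Set.mem_Ioi.1 hε]
  · have hlim : Tendsto (fun ε : ℝ => ⟪y, nv i⟫ + ε * ⟪u, nv i⟫) (𝓝[>] 0) (𝓝 ⟪y, nv i⟫) :=
      tendsto_nhdsWithin_of_tendsto_nhds (Continuous.tendsto' (by fun_prop) 0 _ (by simp))
    exact (hlim.eventually_lt_const hi).mono fun _ h => h.le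

variable (hy : ∀ i, ⟪y, nv i⟫ ≤ c i) (hw : ∀ x, (∀ i, ⟪x, nv i⟫ ≤ c i) → ⟪x - y, w⟫ ≤ 0)
include hy hw

lemma inner_nonpos_of_active_inner_neg {u : E} (hu : ∀ j, ⟪y, nv j⟫ = c j → ⟪u, nv j⟫ < 0) :
    ⟪u, w⟫ ≤ 0 := by
  obtain ⟨ε, hεX, hε⟩ :=
    ((eventually_add_smul_le_of_active_inner_neg hy hu).and self_mem_nhdsWithin).exists
  have := hw _ hεX
  rw [add_sub_cancel_left, inner_smul_left, RCLike.conj_to_real] at this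
  exact nonpos_of_mul_nonpos_right this hε

variable {i₀ : ι} (hn₀ : nv i₀ ≠ 0) {v : E} (hvi₀ : ⟪v, nv i₀⟫ = 0)
  (hvj : ∀ j, ⟪y, nv j⟫ = c j → j ≠ i₀ → ⟪v, nv j⟫ < 0) (hvw : ⟪v, w⟫ = 0)
include hn₀ hvi₀ hvj hvw

lemma inner_le_mul_inner_of_inner_eq_zero {u : E} (hu : ⟪u, nv i₀⟫ = 0) {δ : ℝ} (hδ : 0 < δ) :
    ⟪u, w⟫ ≤ δ * ⟪nv i₀, w⟫ := by
  have hlarge : ∀ᶠ t : ℝ in atTop, ∀ j, ⟪y, nv j⟫ = c j → j ≠ i₀ →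
      ⟪u - δ • nv i₀ + t • v, nv j⟫ < 0 := by
    refine eventually_all.2 fun j => ?_
    by_cases hj : ⟪y, nv j⟫ = c j ∧ j ≠ i₀
    · have : Tendsto (fun t : ℝ => ⟪u - δ • nv i₀, nv j⟫ + t * ⟪v, nv j⟫) atTop atBot :=
        tendsto_atBot_add_const_left _ _ (tendsto_id.atTop_mul_const_of_neg (hvj j hj.1 hj.2))
      filter_upwards [this.eventually_lt_atBot 0] with t ht
      simpa [inner_add_left, inner_smul_left] using fun _ _ => ht
    · exact Eventually.of_forall fun t h1 h2 => absurd ⟨h1, h2⟩ hj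
  obtain ⟨t, ht⟩ := hlarge.exists
  have := inner_nonpos_of_active_inner_neg hy hw (u := u - δ • nv i₀ + t • v) fun j hj => by
    by_cases hji : j = i₀
    · subst hji
      simp only [inner_add_left, inner_sub_left, inner_smul_left, RCLike.conj_to_real, hu, hvi₀,
        real_inner_self_eq_norm_sq]
      nlinarith [pow_pos (norm_pos_iff.2 hn₀) 2]
    · exact ht j hj hji
  simp only [inner_add_left, inner_sub_left, inner_smul_left, RCLike.conj_to_real, hvw] at this
  linarith

lemma inner_eq_zero_of_inner_eq_zero {u : E} (hu : ⟪u, nv i₀⟫ = 0) : ⟪u, w⟫ = 0 := by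
  have key : ∀ u : E, ⟪u, nv i₀⟫ = 0 → ⟪u, w⟫ ≤ 0 := fun u hu =>
    have hlim : Tendsto (fun δ : ℝ => δ * ⟪nv i₀, w⟫) (𝓝[>] 0) (𝓝 0) :=
      tendsto_nhdsWithin_of_tendsto_nhds (Continuous.tendsto' (by fun_prop) 0 _ (zero_mul _))
    ge_of_tendsto hlim <| eventually_nhdsWithin_of_forall fun δ hδ =>
      inner_le_mul_inner_of_inner_eq_zero hy hw hn₀ hvi₀ hvj hvw hu hδ
  have := key (-u) (by rw [inner_neg_left, hu, neg_zero])
  rw [inner_neg_left] at this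
  linarith [key u hu]

theorem exists_nonneg_smul_eq_of_inner_eq_zero : ∃ a : ℝ, 0 ≤ a ∧ w = a • nv i₀ := by
  have hw_mem : w ∈ (ℝ ∙ nv i₀)ᗮᗮ := fun u hu =>
    inner_eq_zero_of_inner_eq_zero hy hw hn₀ hvi₀ hvj hvw
      (Submodule.mem_orthogonal_singleton_iff_inner_left.1 hu)
  obtain ⟨a, rfl⟩ := Submodule.mem_span_singleton.1 ((ℝ ∙ nv i₀).orthogonal_orthogonal ▸ hw_mem)
  have : 0 ≤ a * ‖nv i₀‖ ^ 2 := by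
    simpa [inner_smul_right, real_inner_self_eq_norm_sq] using
      inner_le_mul_inner_of_inner_eq_zero hy hw hn₀ hvi₀ hvj hvw (inner_zero_left _) one_pos
  exact ⟨a, nonneg_of_mul_nonneg_left this (by positivity), rfl⟩

end Polyhedron

theorem reebCone_interior_tangentCone_general {n N : ℕ}
    (nv : Fin N → EuclideanSpace ℂ (Fin n)) (c : Fin N → ℝ)
    (hn : ∀ i, nv i ≠ 0)
    (X : Set (EuclideanSpace ℂ (Fin n)))
    (hX : X = ⋂ i, {x | rInner x (nv i) ≤ c i})
    (y : EuclideanSpace ℂ (Fin n)) (hy : y ∈ X)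
    (i₀ : Fin N)
    (v : EuclideanSpace ℂ (Fin n))
    (hvN : -(Complex.I • v) ∈ normalConePlusC X y)
    (hvi₀ : rInner v (nv i₀) = 0)
    (hvj : ∀ j : Fin N, rInner y (nv j) = c j → j ≠ i₀ → rInner v (nv j) < 0) :
    ∃ a : ℝ, 0 ≤ a ∧ -(Complex.I • v) = a • nv i₀ ∧ (v ≠ 0 → 0 < a) := by
  -- `rInner` is definitionally the inner product of this restriction of scalars.
  let : InnerProductSpace ℝ (EuclideanSpace ℂ (Fin n)) := InnerProductSpace.rclikeToReal ℂ _
  subst hX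
  have hy' : ∀ i, ⟪y, nv i⟫ ≤ c i := Set.mem_iInter.1 hy
  have hw : ∀ x, (∀ i, ⟪x, nv i⟫ ≤ c i) → ⟪x - y, -(Complex.I • v)⟫ ≤ 0 := fun x hx =>
    hvN x (Set.mem_iInter.2 hx)
  have hvw : ⟪v, -(Complex.I • v)⟫ = 0 := by
    rw [inner_neg_right, neg_eq_zero]
    exact real_inner_I_smul_self ℂ v
  obtain ⟨a, ha, hwa⟩ := exists_nonneg_smul_eq_of_inner_eq_zero hy' hw (hn i₀) hvi₀ hvj hvw
  refine ⟨a, ha, hwa, fun hv => ha.lt_of_ne' ?_⟩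
  rintro rfl
  rw [zero_smul, neg_eq_zero, smul_eq_zero] at hwa
  exact hv (hwa.resolve_left Complex.I_ne_zero)

/-- Lemma 3.6 (point form): let `X = ⋂ i, {x ∈ ℂⁿ : ⟪x, nᵢ⟫ ≤ cᵢ}` be a convex
polytope, `y ∈ X`, and `i₀` an active index.  If `v` lies in the Reeb cone at `y`
(`v ∈ T_y⁺X` and `−I·v ∈ N_y⁺X`), `⟪v, n_{i₀}⟫ = 0`, and `⟪v, nⱼ⟫ < 0` for every
other active index `j`, then `−I·v = a·n_{i₀}` for some `a ≥ 0`, with `a > 0`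
when `v ≠ 0`. -/
theorem reebCone_interior_tangentCone {n N : ℕ}
    (nv : Fin N → EuclideanSpace ℂ (Fin n)) (c : Fin N → ℝ)
    (hn : ∀ i, nv i ≠ 0)
    (X : Set (EuclideanSpace ℂ (Fin n)))
    (hX : X = ⋂ i, {x | rInner x (nv i) ≤ c i})
    (hcomp : IsCompact X)
    (y : EuclideanSpace ℂ (Fin n)) (hy : y ∈ X)
    (i₀ : Fin N) (hi₀ : rInner y (nv i₀) = c i₀)
    (v : EuclideanSpace ℂ (Fin n))
    (hvT : v ∈ tangentConePlusC X y)
    (hvN : -(Complex.I • v) ∈ normalConePlusC X y)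
    (hvi₀ : rInner v (nv i₀) = 0)
    (hvj : ∀ j : Fin N, rInner y (nv j) = c j → j ≠ i₀ → rInner v (nv j) < 0) :
    ∃ a : ℝ, 0 ≤ a ∧ -(Complex.I • v) = a • nv i₀ ∧ (v ≠ 0 → 0 < a) :=
  reebCone_interior_tangentCone_general nv c hn X hX y hy i₀ v hvN hvi₀ hvj
end

section
/- Let X ⊆ ℝ^m be a nonempty compact convex set and let ε > 0. Let X_ε = {z ∈ ℝ^m : infDist(z, X) ≤ ε} be the ε-smoothing of X. Then frontier X_ε = {y ∈ ℝ^m : infDist(y, X) = ε}. (Lemma 5.1 of the paper.) -/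
/-!
The homothety with centre `x ∈ X` and ratio `θ ∈ [0, 1]` maps the convex set `X` into itself,
so it scales the distance to `X` by at most `θ`. Hence moving a point `y` with
`infDist y X = ε > 0` along the ray from `x` beyond `y` strictly increases its distance to `X`:
such a `y` is not interior to `X_ε`, and `interior X_ε = {infDist · X < ε}`. As `X_ε` is
closed, its frontier is the level set `{infDist · X = ε}`.
-/

open Metric Set Filter Topology

section StarConvex

variable {E : Type*} [NormedAddCommGroup E] [NormedSpace ℝ E] {s : Set E} {x : E}

theorem StarConvex.infDist_add_smul_sub_le (hs : StarConvex ℝ x s) (z : E) {θ : ℝ}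
    (hθ₀ : 0 ≤ θ) (hθ₁ : θ ≤ 1) : infDist (x + θ • (z - x)) s ≤ θ * infDist z s := by
  rcases s.eq_empty_or_nonempty with rfl | hne
  · simp
  have hx : x ∈ s := hs.mem hne
  rcases hθ₀.eq_or_lt with rfl | hθ
  · simp [infDist_zero_of_mem hx]
  rw [← div_le_iff₀' hθ, le_infDist hne]
  intro p hp
  rw [div_le_iff₀' hθ]
  calc infDist (x + θ • (z - x)) s ≤ dist (x + θ • (z - x)) (x + θ • (p - x)) :=
        infDist_le_dist_of_mem (hs.add_smul_sub_mem hp hθ₀ hθ₁)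
    _ = θ * dist z p := by
        rw [dist_add_left, dist_smul₀, Real.norm_of_nonneg hθ₀, dist_sub_right]

theorem StarConvex.infDist_lt_infDist_add_smul_sub (hs : StarConvex ℝ x s) {y : E}
    (hy : 0 < infDist y s) {t : ℝ} (ht : 1 < t) :
    infDist y s < infDist (x + t • (y - x)) s := by
  have ht₀ : 0 < t := one_pos.trans ht
  have hy_eq : y = x + t⁻¹ • ((x + t • (y - x)) - x) := by
    rw [add_sub_cancel_left, inv_smul_smul₀ ht₀.ne', add_sub_cancel]
  have key := hs.infDist_add_smul_sub_le (x + t • (y - x)) (inv_nonneg.2 ht₀.le)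
    (inv_le_one_of_one_le₀ ht.le)
  rw [← hy_eq, inv_mul_eq_div, le_div_iff₀ ht₀] at key
  nlinarith

end StarConvex

theorem Convex.interior_setOf_infDist_le {E : Type*} [NormedAddCommGroup E] [NormedSpace ℝ E]
    {s : Set E} (hs : Convex ℝ s) {ε : ℝ} (hε : 0 < ε) :
    interior {z | infDist z s ≤ ε} = {z | infDist z s < ε} := by
  refine Subset.antisymm (fun y hy => ?_)
    ((isOpen_lt (continuous_infDist_pt s) continuous_const).subset_interior_iff.2
      fun z hz => le_of_lt (α := ℝ) hz)
  have hy_le : infDist y s ≤ ε := interior_subset (s := {z | infDist z s ≤ ε}) hy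
  refine hy_le.lt_of_ne fun hy_eq => ?_
  obtain ⟨x, hx⟩ : s.Nonempty := by
    rcases s.eq_empty_or_nonempty with rfl | hne
    · simp [hε.ne] at hy_eq
    · exact hne
  have h_tendsto : Tendsto (fun t : ℝ => x + t • (y - x)) (𝓝[>] 1) (𝓝 y) := by
    have : Continuous fun t : ℝ => x + t • (y - x) := by fun_prop
    simpa using (this.tendsto 1).mono_left nhdsWithin_le_nhds
  obtain ⟨t, ht_mem, ht⟩ :=
    ((h_tendsto.eventually (mem_interior_iff_mem_nhds.1 hy)).and self_mem_nhdsWithin).exists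
  have h_grow := (hs.starConvex hx).infDist_lt_infDist_add_smul_sub (hy_eq ▸ hε) (t := t) ht
  exact (ht_mem.trans_eq hy_eq.symm).not_gt h_grow

theorem frontier_smoothing_general {m : ℕ}
    (X : Set (EuclideanSpace ℝ (Fin m)))
    (hconv : Convex ℝ X)
    (ε : ℝ) (hε : 0 < ε) :
    frontier {z : EuclideanSpace ℝ (Fin m) | Metric.infDist z X ≤ ε} =
      {y : EuclideanSpace ℝ (Fin m) | Metric.infDist y X = ε} := by
  rw [frontier, (isClosed_le (continuous_infDist_pt X) continuous_const).closure_eq,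
    hconv.interior_setOf_infDist_le hε]
  ext y
  simp only [Set.mem_sdiff, mem_ofPred_eq, not_lt, le_antisymm_iff]

/-- Lemma 5.1: for a nonempty compact convex set `X ⊆ ℝ^m` and `ε > 0`, the frontier
of the ε-smoothing `X_ε = {z : dist(z, X) ≤ ε}` is `{y : dist(y, X) = ε}`. -/
theorem frontier_smoothing {m : ℕ}
    (X : Set (EuclideanSpace ℝ (Fin m))) (hne : X.Nonempty)
    (hcomp : IsCompact X) (hconv : Convex ℝ X)
    (ε : ℝ) (hε : 0 < ε) :
    frontier {z : EuclideanSpace ℝ (Fin m) | Metric.infDist z X ≤ ε} =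
      {y : EuclideanSpace ℝ (Fin m) | Metric.infDist y X = ε} :=
  frontier_smoothing_general X hconv ε hε
end

section
/- Let X ⊆ ℝ^m be a nonempty compact convex set and let ε > 0. Let Y₀ = {(y, v) ∈ ℝ^m × ℝ^m : y ∈ frontier X, v ∈ N_y⁺X, ‖v‖ = 1} with the subspace topology, and let Y_ε = {z ∈ ℝ^m : infDist(z, X) = ε}. Then the map (y, v) ↦ y + εv is a homeomorphism from Y₀ onto Y_ε, and its inverse sends y ∈ Y_ε to (x, ε⁻¹(y − x)), where x is the unique point of X nearest to y. (Lemma 5.2(a),(b) of the paper.) -/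
open RealInnerProductSpace

/-- The blown-up boundary `Y₀ = {(y,v) : y ∈ frontier X, v ∈ N_y⁺X, ‖v‖ = 1}`. -/
def blownUpBoundary {m : ℕ} (X : Set (EuclideanSpace ℝ (Fin m))) :
    Set (EuclideanSpace ℝ (Fin m) × EuclideanSpace ℝ (Fin m)) :=
  {p | p.1 ∈ frontier X ∧ p.2 ∈ normalConePlus X p.1 ∧ ‖p.2‖ = 1}

section aux
open Metric
variable {m : ℕ}

lemma nearest_inner_le' {X : Set (EuclideanSpace ℝ (Fin m))} (hconv : Convex ℝ X)
    {z x : EuclideanSpace ℝ (Fin m)} (hx : x ∈ X) (hd : ‖z - x‖ = infDist z X) :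
    ∀ w ∈ X, ⟪z - x, w - x⟫ ≤ 0 := by
  rw [← norm_eq_iInf_iff_real_inner_le_zero hconv hx]
  rw [hd, infDist_eq_iInf]
  simp only [dist_eq_norm]

lemma nearest_unique' {X : Set (EuclideanSpace ℝ (Fin m))} (hconv : Convex ℝ X)
    {z x₁ x₂ : EuclideanSpace ℝ (Fin m)} (h1 : x₁ ∈ X) (h2 : x₂ ∈ X)
    (hd1 : ‖z - x₁‖ = infDist z X) (hd2 : ‖z - x₂‖ = infDist z X) : x₁ = x₂ := by
  have A := nearest_inner_le' hconv h1 hd1 x₂ h2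
  have B := nearest_inner_le' hconv h2 hd2 x₁ h1
  have hB : ⟪z - x₂, x₂ - x₁⟫ ≥ 0 := by
    have : ⟪z - x₂, x₂ - x₁⟫ = -⟪z - x₂, x₁ - x₂⟫ := by
      rw [← inner_neg_right]; congr 1; abel
    rw [this]; linarith
  have key : ⟪x₂ - x₁, x₂ - x₁⟫ ≤ 0 := by
    have h3 : ⟪(z - x₁) - (z - x₂), x₂ - x₁⟫ ≤ 0 := by
      rw [inner_sub_left]; linarith
    have h4 : (z - x₁) - (z - x₂) = x₂ - x₁ := by abel
    rwa [h4] at h3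
  exact (sub_eq_zero.mp (real_inner_self_nonpos.mp key)).symm

lemma infDist_add_smul_normal {X : Set (EuclideanSpace ℝ (Fin m))} (hne : X.Nonempty)
    {y v : EuclideanSpace ℝ (Fin m)} (hy : y ∈ X)
    (hv : ∀ x ∈ X, ⟪x - y, v⟫ ≤ 0) (hv1 : ‖v‖ = 1) {ε : ℝ} (hε : 0 < ε) :
    infDist (y + ε • v) X = ε := by
  have hub : infDist (y + ε • v) X ≤ ε := by
    calc infDist (y + ε • v) X ≤ dist (y + ε • v) y := infDist_le_dist_of_mem hy
      _ = ε := by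
        rw [dist_eq_norm]; simp [norm_smul, hv1, abs_of_pos hε]
  have hlb : ε ≤ infDist (y + ε • v) X := by
    rw [infDist_eq_iInf]
    have : Nonempty X := hne.to_subtype
    refine le_ciInf fun w => ?_
    obtain ⟨x, hx⟩ := w
    have h1 : ⟪y + ε • v - x, v⟫ ≤ ‖y + ε • v - x‖ * ‖v‖ := real_inner_le_norm _ _
    have h2 : ⟪y + ε • v - x, v⟫ = ε - ⟪x - y, v⟫ := by
      have : y + ε • v - x = (ε • v) - (x - y) := by abel
      rw [this, inner_sub_left, real_inner_smul_left, real_inner_self_eq_norm_sq, hv1]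
      ring
    have := hv x hx
    rw [dist_eq_norm]
    nlinarith [norm_nonneg (y + ε • v - x)]
  linarith

end aux

/-- Lemma 5.2(a),(b): let `X ⊆ ℝ^m` be a nonempty compact convex set and `ε > 0`.
Let `Y₀` be the blown-up boundary and `Y_ε = {z : dist(z,X) = ε}`.  Then
`(y,v) ↦ y + εv` is a homeomorphism from `Y₀` onto `Y_ε`, and its inverse sends
`y ∈ Y_ε` to `(x, ε⁻¹(y − x))` where `x` is the unique point of `X` nearest
to `y`. -/
theorem blownUpBoundary_homeomorph_smoothing {m : ℕ}
    (X : Set (EuclideanSpace ℝ (Fin m))) (hne : X.Nonempty)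
    (hcomp : IsCompact X) (hconv : Convex ℝ X)
    (ε : ℝ) (hε : 0 < ε) :
    ∃ h : (blownUpBoundary X) ≃ₜ
          {z : EuclideanSpace ℝ (Fin m) | Metric.infDist z X = ε},
      (∀ p : blownUpBoundary X, (h p).val = p.val.1 + ε • p.val.2) ∧
      (∀ y : {z : EuclideanSpace ℝ (Fin m) | Metric.infDist z X = ε},
        ∀ x ∈ X, ‖y.val - x‖ = Metric.infDist y.val X →
        (h.symm y).val = (x, ε⁻¹ • (y.val - x))) := by
  have hXcl : IsClosed X := hcomp.isClosed
  have hfr : frontier X ⊆ X := hXcl.frontier_subset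
  -- forward map
  have hmaps : ∀ p : blownUpBoundary X,
      Metric.infDist (p.val.1 + ε • p.val.2) X = ε := fun ⟨p, h1, h2, h3⟩ =>
    infDist_add_smul_normal hne (hfr h1) h2 h3 hε
  set f : blownUpBoundary X → {z : EuclideanSpace ℝ (Fin m) | Metric.infDist z X = ε} :=
    fun p => ⟨p.val.1 + ε • p.val.2, hmaps p⟩ with hf
  -- each p.1 is the nearest point to f p
  have hnear : ∀ p : blownUpBoundary X,
      ‖(p.val.1 + ε • p.val.2) - p.val.1‖ = Metric.infDist (p.val.1 + ε • p.val.2) X := by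
    rintro ⟨p, h1, h2, h3⟩
    simp only
    rw [hmaps ⟨p, h1, h2, h3⟩]
    simp [norm_smul, h3, abs_of_pos hε]
  have hinj : Function.Injective f := by
    rintro p q hpq
    have hz : p.val.1 + ε • p.val.2 = q.val.1 + ε • q.val.2 := congrArg Subtype.val hpq
    have h1 : p.val.1 = q.val.1 := by
      refine nearest_unique' hconv (hfr p.prop.1) (hfr q.prop.1) (hnear p) ?_
      rw [hz]; exact hnear q
    have h2 : p.val.2 = q.val.2 := by
      have : ε • p.val.2 = ε • q.val.2 := by
        have := hz; rw [h1] at this; exact add_left_cancel this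
      exact smul_right_injective _ hε.ne' this
    exact Subtype.ext (Prod.ext h1 h2)
  have hsurj : Function.Surjective f := by
    rintro ⟨z, hz⟩
    simp only [Set.mem_setOf_eq] at hz
    obtain ⟨x, hxX, hxd⟩ := hcomp.exists_infDist_eq_dist hne z
    have hdx : ‖z - x‖ = Metric.infDist z X := by rw [hxd, dist_eq_norm]
    have hinner := nearest_inner_le' hconv hxX hdx
    have hnx : ‖z - x‖ = ε := by rw [hdx, hz]
    set v : EuclideanSpace ℝ (Fin m) := ε⁻¹ • (z - x) with hv
    have hv1 : ‖v‖ = 1 := by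
      rw [hv, norm_smul, hnx, Real.norm_eq_abs, abs_of_pos (inv_pos.mpr hε)]
      field_simp
    have hvcone : v ∈ normalConePlus X x := by
      intro w hw
      have h1 : ⟪z - x, w - x⟫ ≤ 0 := hinner w hw
      have : ⟪w - x, v⟫ = ε⁻¹ * ⟪z - x, w - x⟫ := by
        rw [hv, real_inner_smul_right, real_inner_comm]
      rw [this]
      exact mul_nonpos_of_nonneg_of_nonpos (inv_pos.mpr hε).le h1
    have hxfr : x ∈ frontier X := by
      rw [frontier_eq_closure_inter_closure]
      constructor
      · exact subset_closure hxX
      · -- x is a limit of points x + δ • v ∉ X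
        have hnotin : ∀ δ : ℝ, 0 < δ → x + δ • v ∉ X := by
          intro δ hδ hmem
          have := hvcone (x + δ • v) hmem
          have h2 : ⟪(x + δ • v) - x, v⟫ = δ := by
            have : (x + δ • v) - x = δ • v := by abel
            rw [this, real_inner_smul_left, real_inner_self_eq_norm_sq, hv1]
            ring
          rw [h2] at this; linarith
        rw [mem_closure_iff_seq_limit]
        refine ⟨fun n => x + (1 / (n + 1) : ℝ) • v, fun n => hnotin _ (by positivity), ?_⟩
        have : Filter.Tendsto (fun n : ℕ => x + (1 / (n + 1) : ℝ) • v)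
            Filter.atTop (nhds (x + (0 : ℝ) • v)) := by
          refine Filter.Tendsto.add tendsto_const_nhds (Filter.Tendsto.smul ?_ tendsto_const_nhds)
          exact tendsto_one_div_add_atTop_nhds_zero_nat
        simpa using this
    refine ⟨⟨(x, v), hxfr, hvcone, hv1⟩, ?_⟩
    apply Subtype.ext
    show x + ε • v = z
    rw [hv, smul_smul, mul_inv_cancel₀ hε.ne', one_smul]
    abel
  -- topology
  have hcompY : IsCompact (blownUpBoundary X) := by
    have hsub : blownUpBoundary X ⊆ X ×ˢ Metric.sphere 0 1 := by
      rintro ⟨y, v⟩ ⟨h1, _, h3⟩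
      exact ⟨hfr h1, by simpa using h3⟩
    have hclosed : IsClosed (blownUpBoundary X) := by
      have e1 : IsClosed {p : EuclideanSpace ℝ (Fin m) × EuclideanSpace ℝ (Fin m) |
          p.1 ∈ frontier X} := isClosed_frontier.preimage continuous_fst
      have e2 : IsClosed {p : EuclideanSpace ℝ (Fin m) × EuclideanSpace ℝ (Fin m) |
          p.2 ∈ normalConePlus X p.1} := by
        have : {p : EuclideanSpace ℝ (Fin m) × EuclideanSpace ℝ (Fin m) |
            p.2 ∈ normalConePlus X p.1} =
            ⋂ x ∈ X, {p | ⟪x - p.1, p.2⟫ ≤ 0} := by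
          ext p; simp [normalConePlus]
        rw [this]
        refine isClosed_biInter fun x _ => ?_
        exact isClosed_le (Continuous.inner (by fun_prop) (by fun_prop)) continuous_const
      have e3 : IsClosed {p : EuclideanSpace ℝ (Fin m) × EuclideanSpace ℝ (Fin m) |
          ‖p.2‖ = 1} := isClosed_eq (by fun_prop) continuous_const
      exact (e1.inter (e2.inter e3) : _)
    exact ((hcomp.prod (isCompact_sphere 0 1)).of_isClosed_subset hclosed hsub)
  have : CompactSpace (blownUpBoundary X) := isCompact_iff_compactSpace.mp hcompY
  have hfc : Continuous f := by
    apply Continuous.subtype_mk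
    fun_prop
  let e : blownUpBoundary X ≃ {z : EuclideanSpace ℝ (Fin m) | Metric.infDist z X = ε} :=
    Equiv.ofBijective f ⟨hinj, hsurj⟩
  have hec : Continuous e := hfc
  refine ⟨hec.homeoOfEquivCompactToT2, fun p => rfl, ?_⟩
  intro y x hxX hxd
  set p := (Continuous.homeoOfEquivCompactToT2 (f := e) hec).symm y with hp
  have hfp : f p = y := by
    have := (Continuous.homeoOfEquivCompactToT2 (f := e) hec).apply_symm_apply y
    exact this
  have hz : p.val.1 + ε • p.val.2 = y.val := congrArg Subtype.val hfp
  have h1 : p.val.1 = x := by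
    refine nearest_unique' hconv (hfr p.prop.1) hxX ?_ hxd
    rw [← hz]; exact hnear p
  have h2 : p.val.2 = ε⁻¹ • (y.val - x) := by
    rw [← hz, h1]
    have : x + ε • p.val.2 - x = ε • p.val.2 := by abel
    rw [this, smul_smul, inv_mul_cancel₀ hε.ne', one_smul]
  exact Prod.ext h1 h2
end

section
/- Let X ⊆ ℝ^m be a nonempty compact convex set, let ε > 0, and let X_ε = {z ∈ ℝ^m : infDist(z, X) ≤ ε}. Let y ∈ ℝ^m satisfy infDist(y, X) = ε and let x be the unique point of X nearest to y. Then the positive normal cone of X_ε at y is the ray spanned by y − x: N_y⁺(X_ε) = {t·(y − x) : t ≥ 0}. (Lemma 5.2(c) of the paper.) -/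
open RealInnerProductSpace

/-- Lemma 5.2(c): let `X ⊆ ℝ^m` be a nonempty compact convex set, `ε > 0`, and
`X_ε = {z : dist(z,X) ≤ ε}`.  If `dist(y,X) = ε` and `x` is the (unique) nearest
point of `X` to `y`, then the positive normal cone of `X_ε` at `y` is the ray
spanned by `y − x`. -/
theorem normalCone_smoothing_eq_ray {m : ℕ}
    (X : Set (EuclideanSpace ℝ (Fin m))) (hne : X.Nonempty)
    (hcomp : IsCompact X) (hconv : Convex ℝ X)
    (ε : ℝ) (hε : 0 < ε)
    (y : EuclideanSpace ℝ (Fin m)) (hy : Metric.infDist y X = ε)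
    (x : EuclideanSpace ℝ (Fin m)) (hx : x ∈ X)
    (hxnear : ‖y - x‖ = Metric.infDist y X) :
    normalConePlus {z : EuclideanSpace ℝ (Fin m) | Metric.infDist z X ≤ ε} y =
      {w : EuclideanSpace ℝ (Fin m) | ∃ t : ℝ, 0 ≤ t ∧ w = t • (y - x)} := by
  have hnorm : ‖y - x‖ = ε := by rw [hxnear, hy]
  -- variational characterization: ∀ q ∈ X, ⟪y - x, q - x⟫ ≤ 0
  have hchar : ∀ q ∈ X, ⟪y - x, q - x⟫ ≤ 0 := by
    have hiInf : ‖y - x‖ = ⨅ w : X, ‖y - w‖ := by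
      rw [hxnear, Metric.infDist_eq_iInf]
      exact iInf_congr fun w => dist_eq_norm _ _
    exact (norm_eq_iInf_iff_real_inner_le_zero hconv hx).mp hiInf
  ext v
  constructor
  · intro hv
    rcases eq_or_ne v 0 with rfl | hv0
    · exact ⟨0, le_rfl, by simp⟩
    -- test points x + ε • u with ‖u‖ ≤ 1 lie in X_ε
    have htest : ∀ u : EuclideanSpace ℝ (Fin m), ‖u‖ ≤ 1 →
        ⟪x + ε • u - y, v⟫ ≤ 0 := by
      intro u hu
      apply hv
      have : Metric.infDist (x + ε • u) X ≤ dist (x + ε • u) x :=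
        Metric.infDist_le_dist_of_mem hx
      refine this.trans ?_
      rw [dist_eq_norm]
      simp only [add_sub_cancel_left, norm_smul, Real.norm_eq_abs, abs_of_pos hε]
      calc ε * ‖u‖ ≤ ε * 1 := by nlinarith [norm_nonneg u]
        _ = ε := mul_one ε
    have key := htest (‖v‖⁻¹ • v) (by
      rw [norm_smul, Real.norm_eq_abs, abs_inv, abs_norm,
        inv_mul_cancel₀ (norm_ne_zero_iff.mpr hv0)])
    have hvnorm : (0:ℝ) < ‖v‖ := norm_pos_iff.mpr hv0
    rw [show x + ε • (‖v‖⁻¹ • v) - y = (x - y) + ε • (‖v‖⁻¹ • v) by abel,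
      inner_add_left, real_inner_smul_left, real_inner_smul_left,
      real_inner_self_eq_norm_sq] at key
    -- key : ⟪x - y, v⟫ + ε * (‖v‖⁻¹ * ‖v‖^2) ≤ 0
    have h1 : ε * ‖v‖ ≤ ⟪y - x, v⟫ := by
      have : ⟪x - y, v⟫ = -⟪y - x, v⟫ := by
        rw [← inner_neg_left]; congr 1; abel
      rw [this] at key
      have h2 : ‖v‖⁻¹ * ‖v‖ ^ 2 = ‖v‖ := by field_simp
      nlinarith
    have h2 : ⟪y - x, v⟫ ≤ ‖y - x‖ * ‖v‖ := real_inner_le_norm _ _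
    have heq : ⟪y - x, v⟫ = ‖y - x‖ * ‖v‖ := le_antisymm h2 (by rw [hnorm]; exact h1)
    have := inner_eq_norm_mul_iff_real.mp heq
    -- this : ‖v‖ • (y - x) = ‖y - x‖ • v
    refine ⟨‖v‖ / ε, by positivity, ?_⟩
    rw [hnorm] at this
    rw [div_eq_mul_inv, mul_comm, mul_smul, this, smul_smul,
      inv_mul_cancel₀ (ne_of_gt hε), one_smul]
  · rintro ⟨t, ht, rfl⟩
    intro z hz
    rcases hcomp.exists_infDist_eq_dist hne z with ⟨p, hp, hpd⟩
    have hzp : ‖z - p‖ ≤ ε := by rw [← dist_eq_norm, ← hpd]; exact hz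
    rw [real_inner_smul_right]
    have hsum : ⟪z - y, y - x⟫ = ⟪z - p, y - x⟫ + ⟪p - x, y - x⟫ + ⟪x - y, y - x⟫ := by
      rw [← inner_add_left, ← inner_add_left]; congr 1; abel
    have e1 : ⟪z - p, y - x⟫ ≤ ε * ε := by
      calc ⟪z - p, y - x⟫ ≤ ‖z - p‖ * ‖y - x‖ := real_inner_le_norm _ _
        _ ≤ ε * ε := by rw [hnorm]; nlinarith [norm_nonneg (z - p)]
    have e2 : ⟪p - x, y - x⟫ ≤ 0 := by
      have := hchar p hp; rwa [real_inner_comm] at this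
    have e3 : ⟪x - y, y - x⟫ = -(ε * ε) := by
      have : ⟪x - y, y - x⟫ = -⟪y - x, y - x⟫ := by
        rw [← inner_neg_left]; congr 1; abel
      rw [this, real_inner_self_eq_norm_sq, hnorm]; ring
    have : ⟪z - y, y - x⟫ ≤ 0 := by rw [hsum]; linarith
    nlinarith
end

section
/- Let Φ and Ψ be degree-one circle lifts. Assume that t ≤ Φ(t) ≤ t + 1/2 for all t ∈ ℝ, and that Ψ(t + 1/2) = Ψ(t) + 1/2 for all t ∈ ℝ. Then τ(Ψ) ≤ τ(Φ ∘ Ψ) ≤ τ(Ψ) + 1/2. (This is the content of Proposition A.9 of the paper: if Ã, B̃ ∈ the universal cover of Sp(2) with ρ(Ã) ∈ (0, 1/2), then ρ(B̃) ≤ ρ(ÃB̃) ≤ ρ(B̃) + 1/2; the lift of a positive elliptic matrix with rotation number in (0, 1/2) satisfies the first hypothesis, and the lift of any symplectic matrix commutes with translation by 1/2.) -/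
/-- Proposition A.9: let `Φ` and `Ψ` be degree-one circle lifts.  If
`t ≤ Φ(t) ≤ t + 1/2` for all `t` (as holds for the lift of a positive elliptic
element of Sp(2) with rotation number in `(0, 1/2)`), and `Ψ` commutes with
translation by `1/2` (as holds for the lift of any symplectic matrix), then
`τ(Ψ) ≤ τ(Φ ∘ Ψ) ≤ τ(Ψ) + 1/2`, where `τ` denotes the translation (rotation)
number. -/
theorem translationNumber_comp_bounds (Φ Ψ : CircleDeg1Lift)
    (hΦ : ∀ t : ℝ, t ≤ Φ t ∧ Φ t ≤ t + 1 / 2)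
    (hΨ : ∀ t : ℝ, Ψ (t + 1 / 2) = Ψ t + 1 / 2) :
    Ψ.translationNumber ≤ (Φ * Ψ).translationNumber ∧
      (Φ * Ψ).translationNumber ≤ Ψ.translationNumber + 1 / 2 := by
  set T : CircleDeg1Lift := ((CircleDeg1Lift.translate (Multiplicative.ofAdd (1 / 2 : ℝ))) : CircleDeg1Lift)
  have hT : ∀ t : ℝ, T t = 1 / 2 + t := fun t => rfl
  have hcomm : Commute Ψ T := by
    ext t
    simp only [CircleDeg1Lift.mul_apply, hT]
    rw [add_comm (1/2 : ℝ) t, hΨ, add_comm]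
  constructor
  · exact CircleDeg1Lift.translationNumber_mono fun t => (hΦ (Ψ t)).1
  · have h1 : (Φ * Ψ).translationNumber ≤ (Ψ * T).translationNumber := by
      apply CircleDeg1Lift.translationNumber_mono
      intro t
      calc (Φ * Ψ) t ≤ Ψ t + 1 / 2 := (hΦ (Ψ t)).2
        _ = Ψ (t + 1 / 2) := (hΨ t).symm
        _ = Ψ (1 / 2 + t) := by rw [add_comm]
        _ = (Ψ * T) t := rfl
    have h2 : (Ψ * T).translationNumber = Ψ.translationNumber + 1 / 2 := by
      rw [CircleDeg1Lift.translationNumber_mul_of_commute hcomm]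
      congr 1
      exact CircleDeg1Lift.translationNumber_translate _
    exact h1.trans_eq h2
end
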